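/- arXiv:1405.2554 — 5 statements merged into one kernel-verified Lean document; each statement's English description precedes it below -/
import Mathlib

section
/- In any Leibniz algebra over a field of characteristic ≠ 2, if x satisfies xx = 0 for all x (so the algebra is a Lie algebra written with left-normed products), then for any elements x₁, x₂, x₃, x₄, the full alternation (skew-symmetrization over all permutations of x₁,...,x₄ with sign) of the left-normed product ((x₁x₂)x₃)x₄ equals one half of the alternation of (x₁x₂)(x₃x₄). -/
/-!
The right Leibniz identity rewrites `(ab)(cd)` as `((ab)c)d - ((ab)d)c`. Alternating over `S₄`,
the second term is the first with `x₃` and `x₄` exchanged, so its alternation is the negative of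
that of the first; hence the alternation of `(ab)(cd)` is twice that of `((ab)c)d`.
-/

open Equiv

theorem sum_sign_smul_comp_swap {ι α M : Type*} [Fintype ι] [DecidableEq ι] [AddCommGroup M]
    (F : (ι → α) → M) (x : ι → α) {i j : ι} (hij : i ≠ j) :
    ∑ σ : Perm ι, (Perm.sign σ : ℤ) • F (x ∘ σ ∘ swap i j) =
      -∑ σ : Perm ι, (Perm.sign σ : ℤ) • F (x ∘ σ) := by
  rw [← Finset.sum_neg_distrib]
  refine Fintype.sum_equiv (Equiv.mulRight (swap i j)) _ _ fun σ => ?_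
  simp [Perm.sign_mul, Perm.sign_swap hij, Perm.coe_mul]

theorem mul_mul_eq_sub_of_leibniz {L : Type*} [NonUnitalNonAssocRing L]
    (leib : ∀ x y z : L, (x * y) * z = (x * z) * y + x * (y * z)) (a b c : L) :
    a * (b * c) = a * b * c - a * c * b :=
  eq_sub_of_add_eq' (leib a b c).symm

theorem alternation_left_normed_eq_half_general (Φ L : Type*) [Field Φ] (h2 : (2 : Φ) ≠ 0)
    [NonUnitalNonAssocRing L] [Module Φ L]
    (leib : ∀ x y z : L, (x * y) * z = (x * z) * y + x * (y * z))
    (x : Fin 4 → L) :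
    ∑ σ : Perm (Fin 4), ((Perm.sign σ : ℤ)) •
        (((x (σ 0) * x (σ 1)) * x (σ 2)) * x (σ 3)) =
      (2 : Φ)⁻¹ • ∑ σ : Perm (Fin 4), ((Perm.sign σ : ℤ)) •
        ((x (σ 0) * x (σ 1)) * (x (σ 2) * x (σ 3))) := by
  have swap_last_two := sum_sign_smul_comp_swap
    (fun y : Fin 4 → L => ((y 0 * y 1) * y 2) * y 3) x (i := 2) (j := 3) (by decide)
  simp only [Function.comp_apply, swap_apply_def, Fin.reduceEq, if_true, if_false]
    at swap_last_two
  simp only [mul_mul_eq_sub_of_leibniz leib (x _ * x _), smul_sub, Finset.sum_sub_distrib]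
  rw [swap_last_two, ← smul_sub, sub_neg_eq_add, ← two_smul Φ, inv_smul_smul₀ h2]

/-- In any Leibniz algebra over a field of characteristic ≠ 2,
if `x*x = 0` for all `x`, then for any `x₁,x₂,x₃,x₄` the full alternation of the
left-normed product `((x₁x₂)x₃)x₄` equals one half of the alternation of
`(x₁x₂)(x₃x₄)`. -/
theorem alternation_left_normed_eq_half (Φ L : Type*) [Field Φ] (h2 : (2 : Φ) ≠ 0)
    [NonUnitalNonAssocRing L] [Module Φ L] [SMulCommClass Φ L L] [IsScalarTower Φ L L]
    (leib : ∀ x y z : L, (x * y) * z = (x * z) * y + x * (y * z))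
    (sq : ∀ x : L, x * x = 0) (x : Fin 4 → L) :
    ∑ σ : Perm (Fin 4), ((Perm.sign σ : ℤ)) •
        (((x (σ 0) * x (σ 1)) * x (σ 2)) * x (σ 3)) =
      (2 : Φ)⁻¹ • ∑ σ : Perm (Fin 4), ((Perm.sign σ : ℤ)) •
        ((x (σ 0) * x (σ 1)) * (x (σ 2) * x (σ 3))) :=
  alternation_left_normed_eq_half_general Φ L h2 leib x
end

section
/- Let Φ be a field of prime characteristic p, W the free Φ-vector space on Φ^ℕ, δ_j and x_j = δ_j - 1 as above. For a finite set S ⊆ ℕ, let f_S ∈ Φ^ℕ be the indicator function of S (value 1 on S, 0 elsewhere). Then for every m ≥ 1, e_{f_∅} x₁ x₂ ⋯ x_m = Σ_{S ⊆ {1,...,m}} (-1)^{m - |S|} e_{f_S}, and in particular this element of W is nonzero. -/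
/-- The free `Φ`-vector space on the set `Φ^ℕ` of functions `ℕ → Φ`. -/
abbrev W (Φ : Type*) [Field Φ] : Type _ := (ℕ → Φ) →₀ Φ

/-- The shift on indexing functions: increments the value at `m` by `1`. -/
def shift (Φ : Type*) [Field Φ] (m : ℕ) : (ℕ → Φ) → (ℕ → Φ) :=
  fun f => Function.update f m (f m + 1)

/-- The endomorphism `δ_m` of `W`. -/
noncomputable def delta (Φ : Type*) [Field Φ] (m : ℕ) : Module.End Φ (W Φ) :=
  Finsupp.lmapDomain Φ Φ (shift Φ m)

/-- The indicator function `f_S : ℕ → Φ` of a finite set `S ⊆ ℕ`. -/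
def indicator (Φ : Type*) [Field Φ] (S : Finset ℕ) : ℕ → Φ :=
  fun i => if i ∈ S then 1 else 0

/-! Each `x_j = δ_j - 1` with `j ∉ S` sends `e_{f_S}` to `e_{f_{S ∪ {j}}} - e_{f_S}`, so applying
`x_1, …, x_m` to `e_{f_∅}` produces the signed sum over all subsets of `{1,…,m}`. In it the
basis vector `e_{f_{{1,…,m}}}` occurs exactly once, with coefficient `1`, since distinct sets have
distinct indicator functions. -/

section

variable {Φ : Type*} [Field Φ]

theorem indicator_injective : Function.Injective (indicator Φ) := by
  intro S T h
  ext i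
  have hi := congrFun h i
  simp only [indicator] at hi
  split_ifs at hi <;> simp_all

theorem shift_indicator_of_notMem {j : ℕ} {S : Finset ℕ} (hj : j ∉ S) :
    shift Φ j (indicator Φ S) = indicator Φ (insert j S) := by
  funext i
  by_cases h : i = j
  · subst h; simp [shift, indicator, hj]
  · simp [shift, indicator, h]

theorem delta_single (j : ℕ) (f : ℕ → Φ) (c : Φ) :
    delta Φ j (Finsupp.single f c) = Finsupp.single (shift Φ j f) c :=
  Finsupp.mapDomain_single

theorem delta_sub_one_single_indicator {j : ℕ} {S : Finset ℕ} (hj : j ∉ S) :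
    (delta Φ j - 1) (Finsupp.single (indicator Φ S) 1) =
      Finsupp.single (indicator Φ (insert j S)) 1 - Finsupp.single (indicator Φ S) 1 := by
  rw [LinearMap.sub_apply, delta_single, shift_indicator_of_notMem hj, Module.End.one_apply]

variable (Φ) in
noncomputable def signedIndicatorSum (T : Finset ℕ) : W Φ :=
  ∑ S ∈ T.powerset, (-1 : Φ) ^ (T.card - S.card) • Finsupp.single (indicator Φ S) 1

theorem signedIndicatorSum_empty :
    signedIndicatorSum Φ ∅ = Finsupp.single (indicator Φ ∅) 1 := by
  simp [signedIndicatorSum]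

theorem delta_sub_one_signedIndicatorSum {j : ℕ} {T : Finset ℕ} (hj : j ∉ T) :
    (delta Φ j - 1) (signedIndicatorSum Φ T) = signedIndicatorSum Φ (insert j T) := by
  rw [signedIndicatorSum, signedIndicatorSum, Finset.sum_powerset_insert hj, map_sum,
    Finset.card_insert_of_notMem hj, ← Finset.sum_add_distrib]
  refine Finset.sum_congr rfl fun S hS => ?_
  have hST : S ⊆ T := Finset.mem_powerset.mp hS
  have hjS : j ∉ S := fun h => hj (hST h)
  rw [map_smul, delta_sub_one_single_indicator hjS, Finset.card_insert_of_notMem hjS,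
    Nat.add_sub_add_right, Nat.sub_add_comm (Finset.card_le_card hST), pow_succ]
  module

theorem foldl_delta_sub_one_signedIndicatorSum (l : List ℕ) (hl : l.Nodup) (T : Finset ℕ)
    (hT : ∀ j ∈ l, j ∉ T) :
    l.foldl (fun w j => (delta Φ j - 1) w) (signedIndicatorSum Φ T) =
      signedIndicatorSum Φ (T ∪ l.toFinset) := by
  induction l generalizing T with
  | nil => simp
  | cons j l ih =>
    obtain ⟨hjl, hl⟩ := List.nodup_cons.mp hl
    rw [List.foldl_cons, delta_sub_one_signedIndicatorSum (hT j List.mem_cons_self),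
      ih hl _ fun i hi => ?_, List.toFinset_cons, Finset.union_insert, Finset.insert_union]
    rw [Finset.mem_insert, not_or]
    exact ⟨ne_of_mem_of_not_mem hi hjl, hT i (List.mem_cons_of_mem j hi)⟩

theorem signedIndicatorSum_apply_indicator_self (T : Finset ℕ) :
    signedIndicatorSum Φ T (indicator Φ T) = 1 := by
  rw [signedIndicatorSum, Finsupp.finsetSum_apply, Finset.sum_eq_single_of_mem T
    (Finset.mem_powerset_self T) fun S _ hS => ?_]
  · simp
  · simp [indicator_injective.ne hS]

theorem signedIndicatorSum_ne_zero (T : Finset ℕ) : signedIndicatorSum Φ T ≠ 0 := by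
  intro h
  simpa [h] using signedIndicatorSum_apply_indicator_self (Φ := Φ) T

end

theorem expansion_indicator_nonzero_general (Φ : Type*) [Field Φ] (m : ℕ) :
    (List.range' 1 m).foldl (fun w j => (delta Φ j - 1) w)
        (Finsupp.single (indicator Φ ∅) (1 : Φ)) =
      ∑ S ∈ (Finset.Icc 1 m).powerset,
        (-1 : Φ) ^ (m - S.card) • Finsupp.single (indicator Φ S) (1 : Φ) ∧
    (List.range' 1 m).foldl (fun w j => (delta Φ j - 1) w)
        (Finsupp.single (indicator Φ ∅) (1 : Φ)) ≠ 0 := by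
  have expansion : (List.range' 1 m).foldl (fun w j => (delta Φ j - 1) w)
      (Finsupp.single (indicator Φ ∅) (1 : Φ)) = signedIndicatorSum Φ (Finset.Icc 1 m) := by
    rw [← signedIndicatorSum_empty, foldl_delta_sub_one_signedIndicatorSum _ List.nodup_range'
      _ fun _ _ => Finset.notMem_empty _, Finset.empty_union, List.toFinset_range'_1_1]
  rw [expansion]
  exact ⟨by simp [signedIndicatorSum], signedIndicatorSum_ne_zero _⟩

/-- with `x_j = δ_j - 1` and `f_S` the indicator function of `S`,
for every `m ≥ 1`,
`e_{f_∅} x₁ x₂ ⋯ x_m = Σ_{S ⊆ {1,…,m}} (-1)^{m-|S|} e_{f_S}`,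
and in particular this element of `W` is nonzero. -/
theorem expansion_indicator_nonzero (Φ : Type*) [Field Φ] (p : ℕ) [Fact p.Prime]
    [CharP Φ p] (m : ℕ) (hm : 1 ≤ m) :
    (List.range' 1 m).foldl (fun w j => (delta Φ j - 1) w)
        (Finsupp.single (indicator Φ ∅) (1 : Φ)) =
      ∑ S ∈ (Finset.Icc 1 m).powerset,
        (-1 : Φ) ^ (m - S.card) • Finsupp.single (indicator Φ S) (1 : Φ) ∧
    (List.range' 1 m).foldl (fun w j => (delta Φ j - 1) w)
        (Finsupp.single (indicator Φ ∅) (1 : Φ)) ≠ 0 :=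
  expansion_indicator_nonzero_general Φ m
end

section
/- With M = W ⊕ L as above over a field Φ of prime characteristic p, M satisfies the Engel identity of order p: for all a, b ∈ M, a·b·b·⋯·b (p right-multiplications by b) equals 0. Here, if b = Σ_s α_s x_s + w with w ∈ W, then right multiplication by b acts as the operator Σ_s α_s x_s, and (Σ_s α_s x_s)^p = Σ_s α_s^p x_s^p = 0 since the x_s commute and x_s^p = 0 and char Φ = p. -/
/-- The operator `x_m = δ_m - 1`. -/
noncomputable def xop (Φ : Type*) [Field Φ] (m : ℕ) : Module.End Φ (W Φ) :=
  delta Φ m - 1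

/-- `L`: the abelian Lie algebra spanned by the commuting operators `x_i`. -/
noncomputable def Lsub (Φ : Type*) [Field Φ] : Submodule Φ (Module.End Φ (W Φ)) :=
  Submodule.span Φ (Set.range (xop Φ))

/-- `M = W ⊕ L`. -/
abbrev M (Φ : Type*) [Field Φ] : Type _ := W Φ × Lsub Φ

/-- Multiplication on `M`: `(w₁ + l₁)(w₂ + l₂) = w₁ · l₂`. -/
noncomputable def mulM (Φ : Type*) [Field Φ] : M Φ → M Φ → M Φ :=
  fun a b => ((b.2 : Module.End Φ (W Φ)) a.1, 0)

section Aux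

variable (Φ : Type*) [Field Φ]

lemma shift_iterate (m n : ℕ) (f : ℕ → Φ) :
    (shift Φ m)^[n] f = Function.update f m (f m + n) := by
  induction n with
  | zero => simp
  | succ n ih =>
    rw [Function.iterate_succ_apply', ih, shift]
    ext k
    by_cases h : k = m <;> simp [Function.update, h] <;> push_cast <;> ring

lemma shift_comm (m n : ℕ) : shift Φ m ∘ shift Φ n = shift Φ n ∘ shift Φ m := by
  rcases eq_or_ne m n with rfl | h
  · rfl
  · funext f
    ext k
    simp only [Function.comp_apply, shift, Function.update]
    split_ifs <;> simp_all <;> omega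

lemma delta_pow (m n : ℕ) :
    (delta Φ m) ^ n = Finsupp.lmapDomain Φ Φ ((shift Φ m)^[n]) := by
  induction n with
  | zero =>
    apply LinearMap.ext; intro w
    simp [Finsupp.lmapDomain, Finsupp.mapDomain_id]
  | succ n ih =>
    rw [pow_succ, ih]
    apply LinearMap.ext; intro w
    simp only [Module.End.mul_apply, Finsupp.lmapDomain_apply, Function.iterate_succ]
    rw [Finsupp.mapDomain_comp]
    simp only [delta, Finsupp.lmapDomain_apply]

lemma delta_comm (m n : ℕ) : Commute (delta Φ m) (delta Φ n) := by
  show _ = _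
  apply LinearMap.ext; intro w
  simp only [Module.End.mul_apply, delta, Finsupp.lmapDomain_apply]
  rw [← Finsupp.mapDomain_comp, ← Finsupp.mapDomain_comp, shift_comm]

variable (p : ℕ) [Fact p.Prime] [CharP Φ p]

lemma delta_pow_p (m : ℕ) : (delta Φ m) ^ p = 1 := by
  rw [delta_pow]
  have : (shift Φ m)^[p] = id := by
    funext f
    rw [shift_iterate]
    simp [CharP.cast_eq_zero Φ p, Function.update_eq_self]
  rw [this]
  apply LinearMap.ext; intro w
  simp [Finsupp.mapDomain_id]

lemma charP_end : CharP (Module.End Φ (W Φ)) p := by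
  refine charP_of_injective_algebraMap (R := Φ) (fun a b hab => ?_) p
  have h1 := LinearMap.congr_fun hab (Finsupp.single (fun _ => (0 : Φ)) 1)
  have h2 := DFunLike.congr_fun h1 (fun _ => (0 : Φ))
  simpa [Module.algebraMap_end_apply] using h2

lemma xop_pow_p (m : ℕ) : (xop Φ m) ^ p = 0 := by
  haveI := charP_end Φ p
  rw [xop, sub_pow_char_of_commute (R := Module.End Φ (W Φ)) p (Commute.one_right (delta Φ m)), delta_pow_p, one_pow, sub_self]

lemma xop_comm (m n : ℕ) : Commute (xop Φ m) (xop Φ n) := by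
  show xop Φ m * xop Φ n = xop Φ n * xop Φ m
  apply LinearMap.ext; intro w
  have h := LinearMap.congr_fun (delta_comm Φ m n).eq w
  simp only [Module.End.mul_apply] at h
  simp only [Module.End.mul_apply, xop, LinearMap.sub_apply, Module.End.one_apply, map_sub]
  rw [h]
  abel

lemma Lsub_comm : ∀ l ∈ Lsub Φ, ∀ l' ∈ Lsub Φ, Commute l l' := by
  intro l hl
  induction hl using Submodule.span_induction with
  | mem x hx =>
    obtain ⟨m, rfl⟩ := hx
    intro l' hl'
    induction hl' using Submodule.span_induction with
    | mem y hy =>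
      obtain ⟨n, rfl⟩ := hy
      exact xop_comm Φ m n
    | zero => exact Commute.zero_right _
    | add y z _ _ hy hz => exact hy.add_right hz
    | smul c y _ hy => exact hy.smul_right c
  | zero => intro l' _; exact Commute.zero_left _
  | add y z _ _ hy hz => intro l' hl'; exact (hy l' hl').add_left (hz l' hl')
  | smul c y _ hy => intro l' hl'; exact (hy l' hl').smul_left c

lemma Lsub_pow_p : ∀ l ∈ Lsub Φ, l ^ p = 0 := by
  haveI := charP_end Φ p
  intro l hl
  induction hl using Submodule.span_induction with
  | mem x hx =>
    obtain ⟨m, rfl⟩ := hx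
    exact xop_pow_p Φ p m
  | zero => exact zero_pow (Fact.out : p.Prime).pos.ne'
  | add y z hy hz ihy ihz =>
    rw [add_pow_char_of_commute (R := Module.End Φ (W Φ)) p (Lsub_comm Φ y hy z hz), ihy, ihz, add_zero]
  | smul c y _ ih => rw [smul_pow, ih, smul_zero]

end Aux

/-- `M = W ⊕ L` satisfies the Engel identity of order `p`:
`p` successive right multiplications by any `b` annihilate any `a`. -/
theorem M_engel (Φ : Type*) [Field Φ] (p : ℕ) [Fact p.Prime] [CharP Φ p] :
    ∀ a b : M Φ, (fun x => mulM Φ x b)^[p] a = 0 := by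
  intro a b
  have key : ∀ n, (fun x => mulM Φ x b)^[n + 1] a =
      (((b.2 : Module.End Φ (W Φ)) ^ (n + 1)) a.1, 0) := by
    intro n
    induction n with
    | zero => simp [mulM]
    | succ n ih =>
      rw [Function.iterate_succ_apply', ih]
      simp [mulM, pow_succ', Module.End.mul_apply]
  obtain ⟨n, rfl⟩ : ∃ n, n + 1 = p := ⟨p - 1, Nat.succ_pred_eq_of_pos (Fact.out : p.Prime).pos⟩
  rw [key, Lsub_pow_p Φ (n + 1) b.2 b.2.2]
  simp [Prod.ext_iff]
end

section
/- With M = W ⊕ L as above over a field Φ of prime characteristic p, the algebra M is not nilpotent: for every natural number m, the left-normed product e_{f₀} x₁ x₂ ⋯ x_m is nonzero in M, where f₀ is the zero function. Hence no identity z₁z₂⋯z_{c+1} = 0 holds in M for any c. -/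
/-- The element `x_i` of `M` (sitting in the `L` component). -/
noncomputable def xel (Φ : Type*) [Field Φ] (i : ℕ) : M Φ :=
  (0, ⟨xop Φ i, Submodule.subset_span ⟨i, rfl⟩⟩)

/-- The element `e_{f₀}` of `M`, `f₀` being the zero function. -/
noncomputable def e0 (Φ : Type*) [Field Φ] : M Φ :=
  (Finsupp.single (fun _ => (0 : Φ)) (1 : Φ), 0)

/-!
Since `x_j = δ_j - 1` and `δ_j` moves `e_f` to `e_{δ_j f}` injectively, if `f j = 0` and no
basis vector in the support of `w` is nonzero at `j`, then the coefficient of `x_j w` at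
`δ_j f` is the coefficient of `w` at `f`. Applying `x_1, …, x_m` in turn to `e_{f₀}` therefore
keeps the coefficient at `δ_m ⋯ δ_1 f₀` (the indicator function of `{1, …, m}`) equal to `1`.
-/

section

variable {Φ : Type*} [Field Φ]

lemma shift_apply_self (m : ℕ) (f : ℕ → Φ) : shift Φ m f m = f m + 1 :=
  Function.update_self _ _ _

lemma shift_apply_of_ne {k m : ℕ} (h : k ≠ m) (f : ℕ → Φ) : shift Φ m f k = f k :=
  Function.update_of_ne h _ _

lemma shift_injective (m : ℕ) : Function.Injective (shift Φ m) := by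
  intro f g h
  funext k
  by_cases hk : k = m
  · subst hk
    simpa [shift_apply_self] using congrFun h k
  · simpa [shift_apply_of_ne hk] using congrFun h k

lemma xop_apply (m : ℕ) (w : W Φ) : xop Φ m w = w.mapDomain (shift Φ m) - w := rfl

lemma xop_apply_shift {m : ℕ} {w : W Φ} (hw : ∀ g ∈ w.support, g m = 0) {f : ℕ → Φ}
    (hf : f m = 0) : xop Φ m w (shift Φ m f) = w f := by
  have hnot : shift Φ m f ∉ w.support := fun h => by
    simpa [shift_apply_self, hf] using hw _ h
  rw [xop_apply, Finsupp.sub_apply, Finsupp.mapDomain_apply (shift_injective m),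
    Finsupp.notMem_support_iff.mp hnot, sub_zero]

lemma apply_eq_zero_of_mem_support_xop {k m : ℕ} (hk : k ≠ m) {w : W Φ}
    (hw : ∀ g ∈ w.support, g k = 0) : ∀ g ∈ (xop Φ m w).support, g k = 0 := by
  classical
  intro g hg
  rw [xop_apply] at hg
  rcases Finset.mem_union.mp (Finsupp.support_sub hg) with h | h
  · obtain ⟨g', hg', rfl⟩ := Finset.mem_image.mp (Finsupp.mapDomain_support h)
    rw [shift_apply_of_ne hk]
    exact hw g' hg'
  · exact hw g h

lemma foldl_xop_apply_foldl_shift {l : List ℕ} (hl : l.Nodup) {w : W Φ}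
    (hw : ∀ g ∈ w.support, ∀ k ∈ l, g k = 0) {f : ℕ → Φ} (hf : ∀ k ∈ l, f k = 0) :
    l.foldl (fun w j => xop Φ j w) w (l.foldl (fun f j => shift Φ j f) f) = w f := by
  induction l generalizing w f with
  | nil => rfl
  | cons j l ih =>
    obtain ⟨hj, hl⟩ := List.nodup_cons.mp hl
    have hw' : ∀ g ∈ (xop Φ j w).support, ∀ k ∈ l, g k = 0 := fun g hg k hk =>
      apply_eq_zero_of_mem_support_xop (ne_of_mem_of_not_mem hk hj)
        (fun g hg => hw g hg k (List.mem_cons_of_mem j hk)) g hg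
    have hf' : ∀ k ∈ l, shift Φ j f k = 0 := fun k hk => by
      rw [shift_apply_of_ne (ne_of_mem_of_not_mem hk hj)]
      exact hf k (List.mem_cons_of_mem j hk)
    rw [List.foldl_cons, List.foldl_cons, ih hl hw' hf']
    exact xop_apply_shift (fun g hg => hw g hg j List.mem_cons_self) (hf j List.mem_cons_self)

lemma fst_foldl_mulM_xel (l : List ℕ) (a : M Φ) :
    (l.foldl (fun a j => mulM Φ a (xel Φ j)) a).1 = l.foldl (fun w j => xop Φ j w) a.1 := by
  induction l generalizing a with
  | nil => rfl
  | cons j l ih => exact ih _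

end

theorem M_not_nilpotent_general (Φ : Type*) [Field Φ] :
    (∀ m : ℕ,
      (List.range' 1 m).foldl (fun a j => mulM Φ a (xel Φ j)) (e0 Φ) ≠ 0) ∧
    ∀ c : ℕ, ∃ z : ℕ → M Φ,
      (List.range' 1 c).foldl (fun a j => mulM Φ a (z j)) (z 0) ≠ 0 := by
  have hprod (m : ℕ) : (List.range' 1 m).foldl (fun a j => mulM Φ a (xel Φ j)) (e0 Φ) ≠ 0 := by
    intro h
    have hcoeff := foldl_xop_apply_foldl_shift (List.nodup_range' (s := 1) (n := m))
      (w := (e0 Φ).1) (f := fun _ => 0)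
      (fun g hg _ _ => by rw [Finset.mem_singleton.mp (Finsupp.support_single_subset hg)])
      (fun _ _ => rfl)
    rw [← fst_foldl_mulM_xel, h] at hcoeff
    simp [e0] at hcoeff
  refine ⟨hprod, fun c => ⟨fun j => if j = 0 then e0 Φ else xel Φ j, ?_⟩⟩
  beta_reduce
  rw [if_pos rfl, List.foldl_ext _ (fun a j => mulM Φ a (xel Φ j)) _
    fun a j hj => by rw [if_neg (Nat.one_le_iff_ne_zero.mp (List.mem_range'_1.mp hj).1)]]
  exact hprod c

/-- `M` is not nilpotent: every left-normed product
`e_{f₀} x₁ x₂ ⋯ x_m` is nonzero; hence no identity `z₁z₂⋯z_{c+1} = 0` holds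
in `M` for any `c`. -/
theorem M_not_nilpotent (Φ : Type*) [Field Φ] (p : ℕ) [Fact p.Prime] [CharP Φ p] :
    (∀ m : ℕ,
      (List.range' 1 m).foldl (fun a j => mulM Φ a (xel Φ j)) (e0 Φ) ≠ 0) ∧
    ∀ c : ℕ, ∃ z : ℕ → M Φ,
      (List.range' 1 c).foldl (fun a j => mulM Φ a (z j)) (z 0) ≠ 0 :=
  M_not_nilpotent_general Φ
end

section
/- The Leibniz algebra H^s = H_s ⊕ T_s satisfies the left-nilpotency identity u(v(wz)) = 0 for all u, v, w, z ∈ H^s. -/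
/-- The Heisenberg Lie algebra `H_s` with basis `a₁,…,a_s, b₁,…,b_s, c`, written
in coordinates: an element is a triple (a-coordinates, b-coordinates,
c-coordinate). -/
abbrev Heis (K : Type*) [Field K] (s : ℕ) : Type _ := (Fin s → K) × (Fin s → K) × K

/-- The Heisenberg bracket, determined by `a_i b_j = δ_{ij} c`, all other
products of basis elements zero, extended anticommutatively and bilinearly. -/
def hmul {K : Type*} [Field K] {s : ℕ} (x y : Heis K s) : Heis K s :=
  (0, 0, ∑ i, (x.1 i * y.2.1 i - x.2.1 i * y.1 i))

/-- The basis element `a_i`. -/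
def ha {K : Type*} [Field K] {s : ℕ} (i : Fin s) : Heis K s := (Pi.single i 1, 0, 0)

/-- The basis element `b_i`. -/
def hb {K : Type*} [Field K] {s : ℕ} (i : Fin s) : Heis K s := (0, Pi.single i 1, 0)

/-- The basis element `c`. -/
def hc {K : Type*} [Field K] {s : ℕ} : Heis K s := (0, 0, 1)

/-- The right action of `H_s` on `T_s = K[t₁,…,t_s]`: `f·a_i = ∂f/∂t_i`,
`f·b_i = t_i·f`, `f·c = f`, extended linearly in the `H_s` argument. -/
noncomputable def hact {K : Type*} [Field K] {s : ℕ}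
    (f : MvPolynomial (Fin s) K) (x : Heis K s) : MvPolynomial (Fin s) K :=
  (∑ i, x.1 i • MvPolynomial.pderiv i f) +
    (∑ i, x.2.1 i • (MvPolynomial.X i * f)) + x.2.2 • f

/-- The algebra `H^s = H_s ⊕ T_s`. -/
abbrev HeisPoly (K : Type*) [Field K] (s : ℕ) : Type _ :=
  Heis K s × MvPolynomial (Fin s) K

/-- Multiplication on `H^s`: `(x + f)(y + g) = xy + f·y`. -/
noncomputable def hsmul {K : Type*} [Field K] {s : ℕ}
    (u v : HeisPoly K s) : HeisPoly K s :=
  (hmul u.1 v.1, hact u.2 v.1)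

/-- the Leibniz algebra `H^s = H_s ⊕ T_s` satisfies the left
nilpotency identity `u(v(wz)) = 0`. -/
theorem heisPoly_left_nilpotent (K : Type*) [Field K] [CharZero K] (s : ℕ) :
    ∀ u v w z : HeisPoly K s, hsmul u (hsmul v (hsmul w z)) = 0 := by
  intro u v w z
  simp [hsmul, hmul, hact, Prod.ext_iff]
end
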